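/- arXiv:2203.10428 — 7 statements merged into one kernel-verified Lean document; each statement's English description precedes it below -/
import Mathlib

section
/- Let E be a real inner product space and f : E → ℝ be differentiable with L_f-Lipschitz gradient, i.e. ‖∇f(x) − ∇f(y)‖ ≤ L_f ‖x − y‖ for all x, y. Let η > 0 satisfy η ≤ 1/L_f, let θ ∈ E, δ ∈ E, and set θ' = θ − η(∇f(θ) + δ). Then f(θ') ≤ f(θ) − (η/2)‖∇f(θ)‖² + (η/2)‖δ‖². -/
/-!
Along the segment from `x` to `y`, the derivative of `t ↦ f (x + t • (y - x))` exceeds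
`⟪∇f x, y - x⟫` by at most `L t ‖y - x‖²`, so comparing with the quadratic
`f x + t ⟪∇f x, y - x⟫ + L t² ‖y - x‖² / 2` gives the descent lemma
`f y ≤ f x + ⟪∇f x, y - x⟫ + L/2 ‖y - x‖²`. For the step `y = θ - η (∇f θ + δ)` and `η L ≤ 1`,
the right-hand side is at most `f θ - η ⟪g, g + δ⟫ + η/2 ‖g + δ‖²` with `g = ∇f θ`, which
equals `f θ - η/2 ‖g‖² + η/2 ‖δ‖²` after expanding the square.
-/

open scoped RealInnerProductSpace

section DescentLemma

variable {E : Type*} [NormedAddCommGroup E] [InnerProductSpace ℝ E] [CompleteSpace E]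

theorem HasGradientAt.hasDerivAt_add_smul {f : E → ℝ} {g x v : E} {t : ℝ}
    (hf : HasGradientAt f g (x + t • v)) :
    HasDerivAt (fun s : ℝ => f (x + s • v)) ⟪g, v⟫ t := by
  have hline : HasDerivAt (fun s : ℝ => x + s • v) v t := by
    simpa using ((hasDerivAt_id t).smul_const v).const_add x
  simpa [Function.comp_def] using hf.hasFDerivAt.comp_hasDerivAt t hline

theorem le_add_inner_gradient_add_sq_of_norm_gradient_sub_le {f : E → ℝ} {L : ℝ}
    (hf : Differentiable ℝ f) {x : E} (hlip : ∀ y, ‖gradient f y - gradient f x‖ ≤ L * ‖y - x‖)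
    (y : E) : f y ≤ f x + ⟪gradient f x, y - x⟫ + L / 2 * ‖y - x‖ ^ 2 := by
  set v := y - x
  have hφ (t : ℝ) : HasDerivAt (fun s : ℝ => f (x + s • v)) ⟪gradient f (x + t • v), v⟫ t :=
    (hf _).hasGradientAt.hasDerivAt_add_smul
  have hψ (t : ℝ) :
      HasDerivAt (fun s : ℝ => f x + s * ⟪gradient f x, v⟫ + L / 2 * s ^ 2 * ‖v‖ ^ 2)
        (⟪gradient f x, v⟫ + L * t * ‖v‖ ^ 2) t := by
    refine ((((hasDerivAt_id' t).mul_const _).const_add (f x)).add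
      (((hasDerivAt_pow 2 t).const_mul (L / 2)).mul_const (‖v‖ ^ 2))).congr_deriv ?_
    ring
  have hslope : ∀ t ∈ Set.Ico (0 : ℝ) 1,
      ⟪gradient f (x + t • v), v⟫ ≤ ⟪gradient f x, v⟫ + L * t * ‖v‖ ^ 2 := by
    intro t ht
    have : ⟪gradient f (x + t • v) - gradient f x, v⟫ ≤ L * t * ‖v‖ ^ 2 :=
      calc ⟪gradient f (x + t • v) - gradient f x, v⟫
          ≤ ‖gradient f (x + t • v) - gradient f x‖ * ‖v‖ := real_inner_le_norm _ _
        _ ≤ L * ‖(x + t • v) - x‖ * ‖v‖ := by gcongr; exact hlip _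
        _ = L * t * ‖v‖ ^ 2 := by
          rw [add_sub_cancel_left, norm_smul, Real.norm_of_nonneg ht.1]; ring
    rwa [inner_sub_left, sub_le_iff_le_add'] at this
  have hcomp := image_le_of_deriv_right_le_deriv_boundary
    (fun t _ => (hφ t).continuousAt.continuousWithinAt) (fun t _ => (hφ t).hasDerivWithinAt)
    (by simp) (fun t _ => (hψ t).continuousAt.continuousWithinAt)
    (fun t _ => (hψ t).hasDerivWithinAt) hslope (Set.right_mem_Icc.2 zero_le_one)
  simpa [v] using hcomp

end DescentLemma

/-- One-step descent estimate for gradient descent with a biased (stale) gradient. -/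
theorem stmt_0 {E : Type*} [NormedAddCommGroup E] [InnerProductSpace ℝ E] [CompleteSpace E]
    (f : E → ℝ) (Lf : ℝ)
    (hdiff : Differentiable ℝ f)
    (hlip : ∀ x y : E, ‖gradient f x - gradient f y‖ ≤ Lf * ‖x - y‖)
    (η : ℝ) (hη : 0 < η) (hηL : η ≤ 1 / Lf)
    (θ δ θ' : E) (hθ' : θ' = θ - η • (gradient f θ + δ)) :
    f θ' ≤ f θ - η / 2 * ‖gradient f θ‖ ^ 2 + η / 2 * ‖δ‖ ^ 2 := by
  have hLf : 0 < Lf := one_div_pos.mp (hη.trans_le hηL)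
  have hηLf : η * Lf ≤ 1 := (le_div_iff₀ hLf).mp hηL
  set g := gradient f θ
  have hstep : θ' - θ = -(η • (g + δ)) := by rw [hθ']; abel
  have hdescent := le_add_inner_gradient_add_sq_of_norm_gradient_sub_le hdiff (hlip · θ) θ'
  rw [hstep, inner_neg_right, real_inner_smul_right, norm_neg, norm_smul,
    Real.norm_of_nonneg hη.le] at hdescent
  have hquad : Lf / 2 * (η * ‖g + δ‖) ^ 2 ≤ η / 2 * ‖g + δ‖ ^ 2 := by
    have : Lf / 2 * (η * ‖g + δ‖) ^ 2 = η * Lf * (η / 2 * ‖g + δ‖ ^ 2) := by ring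
    rw [this]
    exact mul_le_of_le_one_left (by positivity) hηLf
  have hpolar : -(η * ⟪g, g + δ⟫) + η / 2 * ‖g + δ‖ ^ 2
      = -(η / 2 * ‖g‖ ^ 2) + η / 2 * ‖δ‖ ^ 2 := by
    rw [inner_add_right, real_inner_self_eq_norm_sq, norm_add_sq_real]; ring
  linarith
end

section
/- Let E be a real inner product space and f : E → ℝ be differentiable with L_f-Lipschitz gradient ‖∇f(x) − ∇f(y)‖ ≤ L_f ‖x − y‖, and suppose f(x) ≥ m for all x ∈ E. Let η > 0 with η ≤ 1/L_f, let E₀ ≥ 0, and let θ^(1), …, θ^(T+1) ∈ E satisfy θ^(t+1) = θ^(t) − η g^(t) where ‖g^(t) − ∇f(θ^(t))‖ ≤ η E₀ for every t ∈ {1,…,T}. Then (1/T) Σ_{t=1}^{T} ‖∇f(θ^(t))‖² ≤ (2/(η T)) (f(θ^(1)) − m) + η² E₀². -/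
/-!
Along the segment from `x` to `y`, the Lipschitz bound on `∇f` controls the derivative of
`s ↦ f (x + s • (y - x))`, which gives the descent inequality
`f y ≤ f x + ⟪∇f x, y - x⟫ + L/2 ‖y - x‖²`. For a step `y = x - η d` with `η L ≤ 1` the
quadratic term is at most `η/2 ‖d‖²`, and polarization rewrites `-η ⟪∇f x, d⟫ + η/2 ‖d‖²` as
`η/2 (‖d - ∇f x‖² - ‖∇f x‖²)`. Each iteration therefore decreases `f` by at least
`η/2 ‖∇f(θ t)‖² - η/2 (η E₀)²`; summing, the values of `f` telescope and are bounded below by `m`.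
-/

open Finset
open scoped Gradient RealInnerProductSpace

section LipschitzGradient

variable {E : Type*} [NormedAddCommGroup E] [InnerProductSpace ℝ E] [CompleteSpace E]
  {f : E → ℝ} {L : ℝ}

lemma hasDerivAt_comp_add_smul (hf : Differentiable ℝ f) (x v : E) (t : ℝ) :
    HasDerivAt (fun s : ℝ => f (x + s • v)) ⟪∇ f (x + t • v), v⟫ t := by
  have hline : HasDerivAt (fun s : ℝ => x + s • v) v t := by
    simpa using ((hasDerivAt_id t).smul_const v).const_add x
  exact (hf _).hasGradientAt.hasFDerivAt.comp_hasDerivAt t hline |>.congr_deriv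
    (by simp [gradient])

lemma inner_gradient_add_smul_le (hlip : ∀ x y, ‖∇ f x - ∇ f y‖ ≤ L * ‖x - y‖)
    (x v : E) {t : ℝ} (ht : 0 ≤ t) :
    ⟪∇ f (x + t • v), v⟫ ≤ ⟪∇ f x, v⟫ + L * ‖v‖ ^ 2 * t := by
  have hdiff : ⟪∇ f (x + t • v) - ∇ f x, v⟫ ≤ L * ‖v‖ ^ 2 * t :=
    calc ⟪∇ f (x + t • v) - ∇ f x, v⟫
        ≤ ‖∇ f (x + t • v) - ∇ f x‖ * ‖v‖ := real_inner_le_norm _ _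
      _ ≤ L * ‖(x + t • v) - x‖ * ‖v‖ := by gcongr; exact hlip _ _
      _ = L * ‖v‖ ^ 2 * t := by
        rw [add_sub_cancel_left, norm_smul, Real.norm_of_nonneg ht]; ring
  rw [inner_sub_left] at hdiff
  linarith

theorem le_add_inner_gradient_add_of_lipschitz_gradient (hf : Differentiable ℝ f)
    (hlip : ∀ x y, ‖∇ f x - ∇ f y‖ ≤ L * ‖x - y‖) (x y : E) :
    f y ≤ f x + ⟪∇ f x, y - x⟫ + L / 2 * ‖y - x‖ ^ 2 := by
  set v := y - x
  have hB : ∀ t : ℝ, HasDerivAt (fun s => f x + s * ⟪∇ f x, v⟫ + L * ‖v‖ ^ 2 / 2 * s ^ 2)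
      (⟪∇ f x, v⟫ + L * ‖v‖ ^ 2 * t) t := fun t => by
    refine (((hasDerivAt_mul_const ⟪∇ f x, v⟫).const_add (f x)).add
      ((hasDerivAt_pow 2 t).const_mul (L * ‖v‖ ^ 2 / 2))).congr_deriv ?_
    push_cast
    ring
  have key := image_le_of_deriv_right_le_deriv_boundary (a := 0) (b := 1)
    (fun t _ => (hasDerivAt_comp_add_smul hf x v t).continuousAt.continuousWithinAt)
    (fun t _ => (hasDerivAt_comp_add_smul hf x v t).hasDerivWithinAt)
    (by simp) (fun t _ => (hB t).continuousAt.continuousWithinAt)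
    (fun t _ => (hB t).hasDerivWithinAt)
    (fun t ht => inner_gradient_add_smul_le hlip x v ht.1) (Set.right_mem_Icc.2 zero_le_one)
  simp only [one_smul, one_mul, one_pow, v, add_sub_cancel] at key
  linarith

theorem apply_sub_smul_le_of_lipschitz_gradient (hf : Differentiable ℝ f)
    (hlip : ∀ x y, ‖∇ f x - ∇ f y‖ ≤ L * ‖x - y‖) {η : ℝ} (hη : 0 ≤ η) (hηL : η * L ≤ 1)
    (x d : E) :
    f (x - η • d) ≤ f x - η / 2 * ‖∇ f x‖ ^ 2 + η / 2 * ‖d - ∇ f x‖ ^ 2 := by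
  have hdesc := le_add_inner_gradient_add_of_lipschitz_gradient hf hlip x (x - η • d)
  rw [sub_sub_cancel_left, inner_neg_right, real_inner_smul_right, norm_neg, norm_smul,
    Real.norm_of_nonneg hη] at hdesc
  have hcurv : L / 2 * (η * ‖d‖) ^ 2 ≤ η / 2 * ‖d‖ ^ 2 := by
    have := mul_le_mul_of_nonneg_right hηL (by positivity : 0 ≤ η / 2 * ‖d‖ ^ 2)
    nlinarith
  rw [norm_sub_sq_real, real_inner_comm]
  linarith

end LipschitzGradient

lemma sum_Icc_sub_succ {M : Type*} [AddCommGroup M] (F : ℕ → M) (T : ℕ) :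
    ∑ t ∈ Icc 1 T, (F t - F (t + 1)) = F 1 - F (T + 1) := by
  rw [← Ico_add_one_right_eq_Icc]
  simpa only [neg_sub_neg] using sum_Ico_sub (fun t => -F t) (by omega : 1 ≤ T + 1)

lemma mul_sum_le_of_le_sub_succ {c e m : ℝ} {u F : ℕ → ℝ} {T : ℕ}
    (h : ∀ t ∈ Icc 1 T, c * u t ≤ F t - F (t + 1) + e) (hm : m ≤ F (T + 1)) :
    c * ∑ t ∈ Icc 1 T, u t ≤ F 1 - m + T * e :=
  calc c * ∑ t ∈ Icc 1 T, u t
      ≤ ∑ t ∈ Icc 1 T, (F t - F (t + 1) + e) := by rw [mul_sum]; exact sum_le_sum h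
    _ = F 1 - F (T + 1) + T * e := by
      rw [sum_add_distrib, sum_Icc_sub_succ, sum_const, Nat.card_Icc, nsmul_eq_mul,
        Nat.add_sub_cancel]
    _ ≤ F 1 - m + T * e := by linarith

theorem stmt_1_general {E : Type*} [NormedAddCommGroup E] [InnerProductSpace ℝ E] [CompleteSpace E]
    (f : E → ℝ) (Lf m : ℝ)
    (hdiff : Differentiable ℝ f)
    (hlip : ∀ x y : E, ‖gradient f x - gradient f y‖ ≤ Lf * ‖x - y‖)
    (hbdd : ∀ x : E, m ≤ f x)
    (η : ℝ) (hη : 0 < η) (hηL : η ≤ 1 / Lf)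
    (E₀ : ℝ)
    (T : ℕ)
    (θ g : ℕ → E)
    (hupd : ∀ t ∈ Finset.Icc 1 T, θ (t + 1) = θ t - η • g t)
    (herr : ∀ t ∈ Finset.Icc 1 T, ‖g t - gradient f (θ t)‖ ≤ η * E₀) :
    (1 / (T : ℝ)) * ∑ t ∈ Finset.Icc 1 T, ‖gradient f (θ t)‖ ^ 2 ≤
      2 / (η * T) * (f (θ 1) - m) + η ^ 2 * E₀ ^ 2 := by
  obtain rfl | hT := Nat.eq_zero_or_pos T
  · -- `1 / 0 = 0` in `ℝ`, so both averages vanish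
    simp only [Nat.cast_zero, mul_zero, div_zero, zero_mul]
    positivity
  have hLf : 0 < Lf := one_div_pos.1 (hη.trans_le hηL)
  have hηLf : η * Lf ≤ 1 := (le_div_iff₀ hLf).1 hηL
  have hstep : ∀ t ∈ Icc 1 T, η / 2 * ‖∇ f (θ t)‖ ^ 2 ≤
      f (θ t) - f (θ (t + 1)) + η / 2 * (η * E₀) ^ 2 := fun t ht => by
    have hdesc := apply_sub_smul_le_of_lipschitz_gradient hdiff hlip hη.le hηLf (θ t) (g t)
    have herr_sq : η / 2 * ‖g t - ∇ f (θ t)‖ ^ 2 ≤ η / 2 * (η * E₀) ^ 2 := by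
      gcongr; exact herr t ht
    rw [hupd t ht]
    linarith
  have hsum := mul_sum_le_of_le_sub_succ hstep (hbdd (θ (T + 1)))
  have hT' : (T : ℝ) ≠ 0 := Nat.cast_ne_zero.2 hT.ne'
  calc (1 / (T : ℝ)) * ∑ t ∈ Icc 1 T, ‖∇ f (θ t)‖ ^ 2
      = 2 / (η * T) * (η / 2 * ∑ t ∈ Icc 1 T, ‖∇ f (θ t)‖ ^ 2) := by field_simp
    _ ≤ 2 / (η * T) * (f (θ 1) - m + T * (η / 2 * (η * E₀) ^ 2)) := by gcongr
    _ = 2 / (η * T) * (f (θ 1) - m) + η ^ 2 * E₀ ^ 2 := by field_simp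

/-- Average squared gradient norm bound for gradient descent with approximate (stale)
gradients whose error is bounded by `η * E₀`. -/
theorem stmt_1 {E : Type*} [NormedAddCommGroup E] [InnerProductSpace ℝ E] [CompleteSpace E]
    (f : E → ℝ) (Lf m : ℝ)
    (hdiff : Differentiable ℝ f)
    (hlip : ∀ x y : E, ‖gradient f x - gradient f y‖ ≤ Lf * ‖x - y‖)
    (hbdd : ∀ x : E, m ≤ f x)
    (η : ℝ) (hη : 0 < η) (hηL : η ≤ 1 / Lf)
    (E₀ : ℝ) (hE₀ : 0 ≤ E₀)
    (T : ℕ) (hT : 0 < T)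
    (θ g : ℕ → E)
    (hupd : ∀ t ∈ Finset.Icc 1 T, θ (t + 1) = θ t - η • g t)
    (herr : ∀ t ∈ Finset.Icc 1 T, ‖g t - gradient f (θ t)‖ ≤ η * E₀) :
    (1 / (T : ℝ)) * ∑ t ∈ Finset.Icc 1 T, ‖gradient f (θ t)‖ ^ 2 ≤
      2 / (η * T) * (f (θ 1) - m) + η ^ 2 * E₀ ^ 2 :=
  stmt_1_general f Lf m hdiff hlip hbdd η hη hηL E₀ T θ g hupd herr
end

section
/- Let L ≥ 1, let σ : ℝ → ℝ satisfy σ(0) = 0 and |σ(x) − σ(y)| ≤ C_σ |x − y|, let P_in, P_bd ∈ ℝ^{n×n} with ‖P_in‖_F + ‖P_bd‖_F ≤ B_P, X ∈ ℝ^{n×d₀} with ‖X‖_F ≤ B_X, and for each t ∈ ℕ and ℓ ∈ {1,…,L} let W^(t,ℓ) ∈ ℝ^{d_{ℓ-1}×d_ℓ} with ‖W^(t,ℓ)‖_F ≤ B_W. Suppose the family H̃^(t,ℓ) of matrices satisfies H̃^(t,0) = X for all t, H̃^(t,ℓ) = σ(P_in H̃^(t,ℓ-1) W^(t,ℓ)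 + P_bd H̃^(t-1,ℓ-1) W^(t,ℓ)) for all t ≥ 1 and ℓ ∈ {1,…,L}, and ‖H̃^(0,ℓ)‖_F ≤ (C_σ B_P B_W)^ℓ B_X for all ℓ. Then for every t ≥ 0 and ℓ ∈ {0,…,L}, ‖H̃^(t,ℓ)‖_F ≤ (C_σ B_P B_W)^ℓ B_X. -/
open Matrix

attribute [local instance] Matrix.frobeniusNormedAddCommGroup

private lemma map_frobenius_bound {m k : ℕ} (A : Matrix (Fin m) (Fin k) ℝ)
    (σ : ℝ → ℝ) (C : ℝ) (hC : 0 ≤ C) (h : ∀ a, |σ a| ≤ C * |a|) :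
    ‖A.map σ‖ ≤ C * ‖A‖ := by
  rw [Matrix.frobenius_norm_def, Matrix.frobenius_norm_def]
  have hstep : (∑ i, ∑ j, ‖(A.map σ) i j‖ ^ (2 : ℝ)) ^ (1 / 2 : ℝ)
      ≤ (∑ i, ∑ j, (C * ‖A i j‖) ^ (2 : ℝ)) ^ (1 / 2 : ℝ) := by
    apply Real.rpow_le_rpow (by positivity)
    · refine Finset.sum_le_sum fun i _ => Finset.sum_le_sum fun j _ => ?_
      apply Real.rpow_le_rpow (norm_nonneg _) _ (by norm_num)
      simpa [Matrix.map_apply, Real.norm_eq_abs] using h (A i j)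
    · norm_num
  refine hstep.trans (le_of_eq ?_)
  simp_rw [Real.mul_rpow hC (norm_nonneg _), ← Finset.mul_sum]
  rw [Real.mul_rpow (by positivity) (by positivity), ← Real.rpow_mul hC]
  norm_num

/-- Boundedness of the PipeGCN node embedding matrices `H̃^(t,ℓ)`, whose forward pass mixes
fresh intra-partition features (via `Pin`) with one-iteration-stale boundary features
(via `Pbd`); all norms are Frobenius norms. -/
theorem stmt_5 (L n : ℕ) (hL : 1 ≤ L) (d : ℕ → ℕ)
    (σ : ℝ → ℝ) (Cσ : ℝ) (hσ0 : σ 0 = 0)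
    (hσ : ∀ x y : ℝ, |σ x - σ y| ≤ Cσ * |x - y|)
    (BP BX BW : ℝ)
    (Pin Pbd : Matrix (Fin n) (Fin n) ℝ) (hP : ‖Pin‖ + ‖Pbd‖ ≤ BP)
    (X : Matrix (Fin n) (Fin (d 0)) ℝ) (hX : ‖X‖ ≤ BX)
    (W : ℕ → (ℓ : ℕ) → Matrix (Fin (d (ℓ - 1))) (Fin (d ℓ)) ℝ)
    (hW : ∀ t ℓ, 1 ≤ ℓ → ℓ ≤ L → ‖W t ℓ‖ ≤ BW)
    (Ht : ℕ → (ℓ : ℕ) → Matrix (Fin n) (Fin (d ℓ)) ℝ)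
    (hH0 : ∀ t, Ht t 0 = X)
    (hrec : ∀ t, 1 ≤ t → ∀ ℓ, 1 ≤ ℓ → ℓ ≤ L →
      Ht t ℓ = (Pin * Ht t (ℓ - 1) * W t ℓ + Pbd * Ht (t - 1) (ℓ - 1) * W t ℓ).map σ)
    (hbase : ∀ ℓ ≤ L, ‖Ht 0 ℓ‖ ≤ (Cσ * BP * BW) ^ ℓ * BX) :
    ∀ t, ∀ ℓ ≤ L, ‖Ht t ℓ‖ ≤ (Cσ * BP * BW) ^ ℓ * BX := by
  have hCσ : 0 ≤ Cσ := by
    have h1 := hσ 1 0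
    rw [show |(1 : ℝ) - 0| = 1 by norm_num, mul_one] at h1
    exact le_trans (abs_nonneg _) h1
  have hBP : 0 ≤ BP := le_trans (by positivity) hP
  have hBW : 0 ≤ BW := le_trans (norm_nonneg _) (hW 0 1 le_rfl hL)
  have hBX : 0 ≤ BX := le_trans (norm_nonneg _) hX
  have hmap : ∀ a : ℝ, |σ a| ≤ Cσ * |a| := by
    intro a
    simpa [hσ0] using hσ a 0
  intro t
  induction t with
  | zero => exact hbase
  | succ t ih =>
    intro ℓ
    induction ℓ with
    | zero =>
      intro _
      rw [hH0]
      simpa using hX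
    | succ m ihm =>
      intro hℓ
      have hm : m ≤ L := le_of_lt hℓ
      set x := Cσ * BP * BW with hx
      have hA : ‖Ht (t + 1) m‖ ≤ x ^ m * BX := ihm hm
      have hB : ‖Ht t m‖ ≤ x ^ m * BX := ih m hm
      have hWb : ‖W (t + 1) (m + 1)‖ ≤ BW := hW _ _ (Nat.le_add_left 1 m) hℓ
      rw [hrec (t + 1) (Nat.le_add_left 1 t) (m + 1) (Nat.le_add_left 1 m) hℓ]
      refine le_trans (map_frobenius_bound _ σ Cσ hCσ hmap) ?_
      refine le_trans (mul_le_mul_of_nonneg_left (le_trans (norm_add_le _ _)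
        (add_le_add
          (le_trans (Matrix.frobenius_norm_mul _ _)
            (mul_le_mul_of_nonneg_right (Matrix.frobenius_norm_mul _ _) (norm_nonneg _)))
          (le_trans (Matrix.frobenius_norm_mul _ _)
            (mul_le_mul_of_nonneg_right (Matrix.frobenius_norm_mul _ _) (norm_nonneg _)))))
        hCσ) ?_
      simp only [Nat.add_sub_cancel]
      have hxm : (0 : ℝ) ≤ x ^ m * BX := by positivity
      calc Cσ * (‖Pin‖ * ‖Ht (t + 1) m‖ * ‖W (t + 1) (m + 1)‖
              + ‖Pbd‖ * ‖Ht t m‖ * ‖W (t + 1) (m + 1)‖)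
          ≤ Cσ * (‖Pin‖ * (x ^ m * BX) * BW + ‖Pbd‖ * (x ^ m * BX) * BW) := by
            have h1 : ‖Pin‖ * ‖Ht (t + 1) m‖ * ‖W (t + 1) (m + 1)‖
                ≤ ‖Pin‖ * (x ^ m * BX) * BW := by
              apply mul_le_mul _ hWb (norm_nonneg _) (by positivity)
              exact mul_le_mul_of_nonneg_left hA (norm_nonneg _)
            have h2 : ‖Pbd‖ * ‖Ht t m‖ * ‖W (t + 1) (m + 1)‖
                ≤ ‖Pbd‖ * (x ^ m * BX) * BW := by
              apply mul_le_mul _ hWb (norm_nonneg _) (by positivity)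
              exact mul_le_mul_of_nonneg_left hB (norm_nonneg _)
            exact mul_le_mul_of_nonneg_left (add_le_add h1 h2) hCσ
        _ = Cσ * (‖Pin‖ + ‖Pbd‖) * BW * (x ^ m * BX) := by ring
        _ ≤ Cσ * BP * BW * (x ^ m * BX) := by
            apply mul_le_mul_of_nonneg_right _ hxm
            apply mul_le_mul_of_nonneg_right _ hBW
            exact mul_le_mul_of_nonneg_left hP hCσ
        _ = x ^ (m + 1) * BX := by rw [hx, pow_succ]; ring
end

section
/- Let τ : ℝ → ℝ satisfy |τ(x)| ≤ C for all x and |τ(x) − τ(y)| ≤ Λ |x − y| for all x, y. Then for all matrices J₁, J₂, Z₁, Z₂ ∈ ℝ^{m×k} with ‖J₁‖_F ≤ B, one has ‖J₁ ∘ τ(Z₁) − J₂ ∘ τ(Z₂)‖_F ≤ B Λ ‖Z₁ − Z₂‖_F + C ‖J₁ − J₂‖_F. -/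
open Matrix

attribute [local instance] Matrix.frobeniusNormedAddCommGroup
attribute [local instance] Matrix.frobeniusNormedSpace

private lemma rpow_two_norm (x : ℝ) : ‖x‖ ^ (2 : ℝ) = x ^ 2 := by
  rw [show (2 : ℝ) = ((2 : ℕ) : ℝ) by norm_num, Real.rpow_natCast, Real.norm_eq_abs, sq_abs]

private lemma frob_le_of_sq {m k : ℕ} (A B : Matrix (Fin m) (Fin k) ℝ)
    (h : ∀ i j, (A i j) ^ 2 ≤ (B i j) ^ 2) : ‖A‖ ≤ ‖B‖ := by
  rw [Matrix.frobenius_norm_def, Matrix.frobenius_norm_def]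
  apply Real.rpow_le_rpow
  · positivity
  · apply Finset.sum_le_sum
    intro i _
    apply Finset.sum_le_sum
    intro j _
    rw [rpow_two_norm, rpow_two_norm]
    exact h i j
  · norm_num

private lemma frob_hadamard_le {m k : ℕ} (A B : Matrix (Fin m) (Fin k) ℝ) :
    ‖A ⊙ B‖ ≤ ‖A‖ * ‖B‖ := by
  rw [Matrix.frobenius_norm_def, Matrix.frobenius_norm_def, Matrix.frobenius_norm_def,
    ← Real.mul_rpow (by positivity) (by positivity)]
  apply Real.rpow_le_rpow (by positivity) _ (by norm_num)
  simp only [rpow_two_norm, Matrix.hadamard_apply]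
  set SB : ℝ := ∑ i, ∑ j, B i j ^ 2 with hSB
  have hB2 : ∀ i j, B i j ^ 2 ≤ SB := by
    intro i j
    calc B i j ^ 2 ≤ ∑ j', B i j' ^ 2 :=
          Finset.single_le_sum (f := fun j' => B i j' ^ 2)
            (fun j' _ => by positivity) (Finset.mem_univ j)
      _ ≤ SB := Finset.single_le_sum (f := fun i' => ∑ j', B i' j' ^ 2)
          (fun i' _ => by positivity) (Finset.mem_univ i)
  calc ∑ i, ∑ j, (A i j * B i j) ^ 2
      ≤ ∑ i, ∑ j, A i j ^ 2 * SB := by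
        apply Finset.sum_le_sum; intro i _
        apply Finset.sum_le_sum; intro j _
        calc (A i j * B i j) ^ 2 = A i j ^ 2 * B i j ^ 2 := by ring
          _ ≤ A i j ^ 2 * SB := mul_le_mul_of_nonneg_left (hB2 i j) (by positivity)
    _ = (∑ i, ∑ j, A i j ^ 2) * SB := by
        rw [Finset.sum_mul]
        congr 1; funext i
        rw [Finset.sum_mul]

/-- Perturbation inequality for the intermediate matrices `M = J ∘ τ(Z)` (Hadamard product
with an entrywise-applied bounded Lipschitz function), in Frobenius norm. -/
theorem stmt_7 (m k : ℕ) (τ : ℝ → ℝ) (C Λ B : ℝ)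
    (hτb : ∀ x : ℝ, |τ x| ≤ C)
    (hτl : ∀ x y : ℝ, |τ x - τ y| ≤ Λ * |x - y|)
    (J₁ J₂ Z₁ Z₂ : Matrix (Fin m) (Fin k) ℝ) (hJ₁ : ‖J₁‖ ≤ B) :
    ‖J₁ ⊙ Z₁.map τ - J₂ ⊙ Z₂.map τ‖ ≤ B * Λ * ‖Z₁ - Z₂‖ + C * ‖J₁ - J₂‖ := by
  have hC : 0 ≤ C := le_trans (abs_nonneg _) (hτb 0)
  have hΛ : 0 ≤ Λ := by
    have := hτl 0 1
    simp at this
    exact le_trans (abs_nonneg _) this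
  have hB : 0 ≤ B := le_trans (norm_nonneg _) hJ₁
  have hdecomp : J₁ ⊙ Z₁.map τ - J₂ ⊙ Z₂.map τ =
      J₁ ⊙ (Z₁.map τ - Z₂.map τ) + (J₁ - J₂) ⊙ Z₂.map τ := by
    ext i j
    simp [Matrix.hadamard_apply, Matrix.sub_apply, Matrix.add_apply, Matrix.map_apply]
    ring
  rw [hdecomp]
  refine le_trans (norm_add_le _ _) (add_le_add ?_ ?_)
  · -- first term
    have h1 : ‖Z₁.map τ - Z₂.map τ‖ ≤ ‖Λ • (Z₁ - Z₂)‖ := by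
      apply frob_le_of_sq
      intro i j
      simp only [Matrix.sub_apply, Matrix.map_apply, Matrix.smul_apply, smul_eq_mul]
      calc (τ (Z₁ i j) - τ (Z₂ i j)) ^ 2 = |τ (Z₁ i j) - τ (Z₂ i j)| ^ 2 := (sq_abs _).symm
        _ ≤ (Λ * |Z₁ i j - Z₂ i j|) ^ 2 :=
            pow_le_pow_left₀ (abs_nonneg _) (hτl (Z₁ i j) (Z₂ i j)) 2
        _ = (Λ * (Z₁ i j - Z₂ i j)) ^ 2 := by rw [mul_pow, mul_pow, sq_abs]
    have h2 : ‖Λ • (Z₁ - Z₂)‖ = Λ * ‖Z₁ - Z₂‖ := by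
      rw [norm_smul, Real.norm_eq_abs, abs_of_nonneg hΛ]
    calc ‖J₁ ⊙ (Z₁.map τ - Z₂.map τ)‖ ≤ ‖J₁‖ * ‖Z₁.map τ - Z₂.map τ‖ := frob_hadamard_le _ _
      _ ≤ B * (Λ * ‖Z₁ - Z₂‖) :=
          mul_le_mul hJ₁ (le_trans h1 (le_of_eq h2)) (norm_nonneg _) hB
      _ = B * Λ * ‖Z₁ - Z₂‖ := by ring
  · -- second term
    have h1 : ‖(J₁ - J₂) ⊙ Z₂.map τ‖ ≤ ‖C • (J₁ - J₂)‖ := by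
      apply frob_le_of_sq
      intro i j
      simp only [Matrix.hadamard_apply, Matrix.sub_apply, Matrix.map_apply, Matrix.smul_apply,
        smul_eq_mul]
      calc ((J₁ i j - J₂ i j) * τ (Z₂ i j)) ^ 2
          = |τ (Z₂ i j)| ^ 2 * (J₁ i j - J₂ i j) ^ 2 := by rw [sq_abs]; ring
        _ ≤ C ^ 2 * (J₁ i j - J₂ i j) ^ 2 := by
            apply mul_le_mul_of_nonneg_right _ (by positivity)
            exact pow_le_pow_left₀ (abs_nonneg _) (hτb (Z₂ i j)) 2
        _ = (C * (J₁ i j - J₂ i j)) ^ 2 := by ring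
    calc ‖(J₁ - J₂) ⊙ Z₂.map τ‖ ≤ ‖C • (J₁ - J₂)‖ := h1
      _ = C * ‖J₁ - J₂‖ := by rw [norm_smul, Real.norm_eq_abs, abs_of_nonneg hC]
end

section
/- Let L ≥ 1, let σ : ℝ → ℝ satisfy |σ(x) − σ(y)| ≤ C_σ |x − y| for all x, y, let P_in, P_bd ∈ ℝ^{n×n} with ‖P_in‖_F + ‖P_bd‖_F ≤ B_P and set P = P_in + P_bd, let X ∈ ℝ^{n×d₀}, and let W^(ℓ) ∈ ℝ^{d_{ℓ-1}×d_ℓ} with ‖W^(ℓ)‖_F ≤ B_W for ℓ = 1,…,L. Define the exact forward pass H^(0) = X, Z^(ℓ) = P H^(ℓ-1) W^(ℓ), H^(ℓ) = σ(Z^(ℓ)). Let H̃'^(ℓ-1), H̃^(ℓ) and Z̃^(ℓ) satisfy H̃^(0) = X, Z̃^(ℓ) = P_in H̃^(ℓ-1) W^(ℓ) + P_bd H̃'^(ℓ-1) W^(ℓ), H̃^(ℓ) = σ(Z̃^(ℓ)), where ‖H̃'^(ℓ) − H̃^(ℓ)‖_F ≤ B_{ΔH} for all ℓ ∈ {0,…,L−1}.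 Then for every ℓ ∈ {1,…,L}: ‖Z̃^(ℓ) − Z^(ℓ)‖_F ≤ B_{ΔH} Σ_{i=1}^{ℓ} C_σ^{i-1} B_W^i B_P^i and ‖H̃^(ℓ) − H^(ℓ)‖_F ≤ B_{ΔH} Σ_{i=1}^{ℓ} (C_σ B_W B_P)^i. -/
open Matrix

attribute [local instance] Matrix.frobeniusNormedAddCommGroup

/-- Entrywise Lipschitz maps are Lipschitz in the Frobenius norm. -/
lemma frob_lip_map {m n : Type*} [Fintype m] [Fintype n] (σ : ℝ → ℝ) (Cσ : ℝ)
    (hCσ : 0 ≤ Cσ) (hσ : ∀ x y : ℝ, |σ x - σ y| ≤ Cσ * |x - y|)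
    (A B : Matrix m n ℝ) : ‖A.map σ - B.map σ‖ ≤ Cσ * ‖A - B‖ := by
  rw [frobenius_norm_def, frobenius_norm_def]
  have h1 : (∑ i, ∑ j, ‖(A.map σ - B.map σ) i j‖ ^ (2 : ℝ)) ≤
      Cσ ^ (2 : ℝ) * ∑ i, ∑ j, ‖(A - B) i j‖ ^ (2 : ℝ) := by
    rw [Finset.mul_sum]
    refine Finset.sum_le_sum fun i _ => ?_
    rw [Finset.mul_sum]
    refine Finset.sum_le_sum fun j _ => ?_
    rw [← Real.mul_rpow hCσ (norm_nonneg _)]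
    refine Real.rpow_le_rpow (norm_nonneg _) ?_ (by norm_num)
    simpa [Matrix.sub_apply, Matrix.map_apply, Real.norm_eq_abs] using
      hσ (A i j) (B i j)
  calc (∑ i, ∑ j, ‖(A.map σ - B.map σ) i j‖ ^ (2 : ℝ)) ^ (1/2 : ℝ)
      ≤ (Cσ ^ (2 : ℝ) * ∑ i, ∑ j, ‖(A - B) i j‖ ^ (2 : ℝ)) ^ (1/2 : ℝ) := by
        refine Real.rpow_le_rpow ?_ h1 (by norm_num)
        positivity
    _ = Cσ * (∑ i, ∑ j, ‖(A - B) i j‖ ^ (2 : ℝ)) ^ (1/2 : ℝ) := by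
        rw [Real.mul_rpow (by positivity) (by positivity), ← Real.rpow_mul hCσ]
        norm_num

lemma frob_mul3 {l m p q : Type*} [Fintype l] [Fintype m] [Fintype p] [Fintype q]
    (A : Matrix l m ℝ) (B : Matrix m p ℝ) (C : Matrix p q ℝ) :
    ‖A * B * C‖ ≤ ‖A‖ * ‖B‖ * ‖C‖ :=
  le_trans (frobenius_norm_mul _ _)
    (mul_le_mul_of_nonneg_right (frobenius_norm_mul _ _) (norm_nonneg _))

lemma step_norm {n p q : ℕ} (Pin Pbd : Matrix (Fin n) (Fin n) ℝ)
    (A A' B : Matrix (Fin n) (Fin p) ℝ) (Wm : Matrix (Fin p) (Fin q) ℝ)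
    (BP BW a b : ℝ) (hP : ‖Pin‖ + ‖Pbd‖ ≤ BP) (hWm : ‖Wm‖ ≤ BW)
    (ha : ‖A - B‖ ≤ a) (hb : ‖A' - A‖ ≤ b) :
    ‖Pin * A * Wm + Pbd * A' * Wm - (Pin + Pbd) * B * Wm‖ ≤ BP * a * BW + BP * b * BW := by
  have ha0 : 0 ≤ a := le_trans (norm_nonneg _) ha
  have hb0 : 0 ≤ b := le_trans (norm_nonneg _) hb
  have hBP : 0 ≤ BP := le_trans (by positivity) hP
  have hBW : 0 ≤ BW := le_trans (norm_nonneg _) hWm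
  have hPbd : ‖Pbd‖ ≤ BP := le_trans (le_add_of_nonneg_left (norm_nonneg _)) hP
  have key : Pin * A * Wm + Pbd * A' * Wm - (Pin + Pbd) * B * Wm
      = Pin * (A - B) * Wm + Pbd * (A' - A) * Wm + Pbd * (A - B) * Wm := by
    simp only [Matrix.add_mul, Matrix.sub_mul, Matrix.mul_sub]
    abel
  rw [key]
  calc ‖Pin * (A - B) * Wm + Pbd * (A' - A) * Wm + Pbd * (A - B) * Wm‖
      ≤ ‖Pin‖ * ‖A - B‖ * ‖Wm‖ + ‖Pbd‖ * ‖A' - A‖ * ‖Wm‖ + ‖Pbd‖ * ‖A - B‖ * ‖Wm‖ :=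
        le_trans (norm_add₃_le)
          (add_le_add (add_le_add (frob_mul3 _ _ _) (frob_mul3 _ _ _)) (frob_mul3 _ _ _))
    _ = (‖Pin‖ + ‖Pbd‖) * (‖A - B‖ * ‖Wm‖) + ‖Pbd‖ * ‖A' - A‖ * ‖Wm‖ := by ring
    _ ≤ BP * (a * BW) + BP * b * BW := by
        gcongr <;> first | assumption | positivity
    _ = BP * a * BW + BP * b * BW := by ring

lemma sum_S_succ (Cσ BW BP : ℝ) (m : ℕ) :
    ∑ i ∈ Finset.Icc 1 (m + 1), Cσ ^ (i - 1) * BW ^ i * BP ^ i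
      = BW * BP + Cσ * BW * BP * ∑ i ∈ Finset.Icc 1 m, Cσ ^ (i - 1) * BW ^ i * BP ^ i := by
  induction m with
  | zero => simp
  | succ k ih =>
    conv_lhs => rw [Finset.sum_Icc_succ_top (by omega : 1 ≤ k + 1 + 1), ih]
    conv_rhs => rw [Finset.sum_Icc_succ_top (by omega : 1 ≤ k + 1)]
    simp only [Nat.add_sub_cancel]
    ring

lemma sum_T_eq (Cσ BW BP : ℝ) (m : ℕ) :
    ∑ i ∈ Finset.Icc 1 m, (Cσ * BW * BP) ^ i
      = Cσ * ∑ i ∈ Finset.Icc 1 m, Cσ ^ (i - 1) * BW ^ i * BP ^ i := by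
  rw [Finset.mul_sum]
  refine Finset.sum_congr rfl fun i hi => ?_
  obtain ⟨j, rfl⟩ := Nat.exists_eq_add_of_le (Finset.mem_Icc.mp hi).1
  simp only [Nat.add_sub_cancel_left, mul_pow]
  ring

/-- Bounded error between PipeGCN's forward pass (with one-iteration-stale boundary
embeddings `Ht'`) and the exact GCN forward pass computed with the same weights,
in Frobenius norm. -/
theorem stmt_11 (L n : ℕ) (hL : 1 ≤ L) (d : ℕ → ℕ)
    (σ : ℝ → ℝ) (Cσ : ℝ) (hσ : ∀ x y : ℝ, |σ x - σ y| ≤ Cσ * |x - y|)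
    (BP BW BΔH : ℝ)
    (Pin Pbd : Matrix (Fin n) (Fin n) ℝ) (hP : ‖Pin‖ + ‖Pbd‖ ≤ BP)
    (X : Matrix (Fin n) (Fin (d 0)) ℝ)
    (W : (ℓ : ℕ) → Matrix (Fin (d (ℓ - 1))) (Fin (d ℓ)) ℝ)
    (hW : ∀ ℓ, 1 ≤ ℓ → ℓ ≤ L → ‖W ℓ‖ ≤ BW)
    (H Z Ht Ht' Zt : (ℓ : ℕ) → Matrix (Fin n) (Fin (d ℓ)) ℝ)
    (hH0 : H 0 = X)
    (hZ : ∀ ℓ, 1 ≤ ℓ → ℓ ≤ L → Z ℓ = (Pin + Pbd) * H (ℓ - 1) * W ℓ)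
    (hH : ∀ ℓ, 1 ≤ ℓ → ℓ ≤ L → H ℓ = (Z ℓ).map σ)
    (hHt0 : Ht 0 = X)
    (hZt : ∀ ℓ, 1 ≤ ℓ → ℓ ≤ L → Zt ℓ = Pin * Ht (ℓ - 1) * W ℓ + Pbd * Ht' (ℓ - 1) * W ℓ)
    (hHt : ∀ ℓ, 1 ≤ ℓ → ℓ ≤ L → Ht ℓ = (Zt ℓ).map σ)
    (hstale : ∀ ℓ, ℓ < L → ‖Ht' ℓ - Ht ℓ‖ ≤ BΔH) :
    ∀ ℓ, 1 ≤ ℓ → ℓ ≤ L →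
      ‖Zt ℓ - Z ℓ‖ ≤ BΔH * ∑ i ∈ Finset.Icc 1 ℓ, Cσ ^ (i - 1) * BW ^ i * BP ^ i ∧
      ‖Ht ℓ - H ℓ‖ ≤ BΔH * ∑ i ∈ Finset.Icc 1 ℓ, (Cσ * BW * BP) ^ i := by
  have hCσ : 0 ≤ Cσ := le_trans (abs_nonneg _) (by simpa using hσ 1 0)
  have hBΔH : 0 ≤ BΔH := le_trans (norm_nonneg _) (hstale 0 (by omega))
  have hBW : 0 ≤ BW := le_trans (norm_nonneg _) (hW 1 le_rfl hL)
  have hBP : 0 ≤ BP := le_trans (by positivity) hP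
  have hPin : ‖Pin‖ ≤ BP := le_trans (le_add_of_nonneg_right (norm_nonneg _)) hP
  have hPbd : ‖Pbd‖ ≤ BP := le_trans (le_add_of_nonneg_left (norm_nonneg _)) hP
  intro ℓ
  induction ℓ with
  | zero => omega
  | succ k ih =>
    intro _ hkL
    -- first establish the Z bound
    have hZbound : ‖Zt (k + 1) - Z (k + 1)‖ ≤
        BΔH * ∑ i ∈ Finset.Icc 1 (k + 1), Cσ ^ (i - 1) * BW ^ i * BP ^ i := by
      rcases Nat.eq_zero_or_pos k with hk | hk
      · subst hk
        have key : Zt 1 - Z 1 = Pbd * (Ht' 0 - Ht 0) * W 1 := by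
          rw [hZt 1 le_rfl hkL, hZ 1 le_rfl hkL, hHt0, hH0]
          simp only [Matrix.add_mul, Matrix.sub_mul, Matrix.mul_sub]
          abel
        rw [key]
        have h1 := frob_mul3 Pbd (Ht' 0 - Ht 0) (W 1)
        have h2 := hstale 0 (by omega)
        have h3 := hW 1 le_rfl hkL
        have h4 : ‖Pbd‖ * ‖Ht' 0 - Ht 0‖ * ‖W 1‖ ≤ BP * BΔH * BW := by
          gcongr <;> first | assumption | positivity
        have h5 : ((1 : ℕ) - 1) = 0 := rfl
        simp only [Finset.Icc_self, Finset.sum_singleton, h5, pow_zero, pow_one, one_mul]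
        nlinarith
      · obtain ⟨hZk, hHk⟩ := ih hk (by omega)
        have hsn := step_norm Pin Pbd (Ht k) (Ht' k) (H k) (W (k + 1)) BP BW
          (‖Ht k - H k‖) BΔH hP (hW (k + 1) (by omega) hkL) le_rfl (hstale k (by omega))
        have e1 := hZt (k + 1) (by omega) hkL
        have e2 := hZ (k + 1) (by omega) hkL
        rw [e1, e2, sum_S_succ]
        set S := ∑ i ∈ Finset.Icc 1 k, Cσ ^ (i - 1) * BW ^ i * BP ^ i with hS
        have hT : ‖Ht k - H k‖ ≤ BΔH * (Cσ * S) := by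
          rw [hS, ← sum_T_eq]
          exact hHk
        have hSnn : 0 ≤ S := by
          rw [hS]
          exact Finset.sum_nonneg fun i _ => by positivity
        have h6 : BP * ‖Ht k - H k‖ * BW ≤ BP * (BΔH * (Cσ * S)) * BW := by gcongr
        have e3 : BP * (BΔH * (Cσ * S)) * BW + BP * BΔH * BW
            = BΔH * (BW * BP + Cσ * BW * BP * S) := by ring
        exact le_trans hsn (by linarith)
    refine ⟨hZbound, ?_⟩
    have eH : Ht (k + 1) - H (k + 1) = (Zt (k + 1)).map σ - (Z (k + 1)).map σ := by
      rw [hHt (k + 1) (by omega) hkL, hH (k + 1) (by omega) hkL]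
    calc ‖Ht (k + 1) - H (k + 1)‖ ≤ Cσ * ‖Zt (k + 1) - Z (k + 1)‖ := by
          rw [eH]; exact frob_lip_map σ Cσ hCσ hσ _ _
      _ ≤ Cσ * (BΔH * ∑ i ∈ Finset.Icc 1 (k + 1), Cσ ^ (i - 1) * BW ^ i * BP ^ i) := by
          gcongr
      _ = BΔH * ∑ i ∈ Finset.Icc 1 (k + 1), (Cσ * BW * BP) ^ i := by
          rw [sum_T_eq]; ring
end

section
/- Let L ≥ 2, let τ : ℝ → ℝ satisfy |τ(x)| ≤ C_σ and |τ(x) − τ(y)| ≤ L_σ |x − y| for all x, y, let P_in, P_bd ∈ ℝ^{n×n} with ‖P_in‖_F + ‖P_bd‖_F ≤ B_P and P = P_in + P_bd, and let W^(ℓ), W'^(ℓ) ∈ ℝ^{d_{ℓ-1}×d_ℓ} with ‖W^(ℓ)‖_F, ‖W'^(ℓ)‖_F ≤ B_W and ‖W^(ℓ) − W'^(ℓ)‖_F ≤ B_{ΔW}. Suppose: (i) the exact backward pass satisfies J^(ℓ-1) = Pᵀ (J^(ℓ) ∘ τ(Z^(ℓ))) (W^(ℓ))ᵀ for ℓ =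 L,…,2; (ii) the stale backward pass satisfies J̃^(ℓ-1) = P_inᵀ M̃^(ℓ) (W^(ℓ))ᵀ + P_bdᵀ M̃'^(ℓ) (W'^(ℓ))ᵀ for ℓ = L,…,2, where M̃^(ℓ) = J̃^(ℓ) ∘ τ(Z̃^(ℓ)); (iii) ‖J̃^(L) − J^(L)‖_F ≤ L_loss E_H; (iv) ‖Z̃^(ℓ) − Z^(ℓ)‖_F ≤ E_Z, ‖J̃^(ℓ)‖_F ≤ B_J, ‖M̃'^(ℓ)‖_F ≤ B_M, and ‖M̃^(ℓ) − M̃'^(ℓ)‖_F ≤ B_{ΔM} for all ℓ. Set U = B_P (B_W B_J E_Z L_σ + B_{ΔW} B_M + B_W B_{ΔM}). Then for every ℓ ∈ {1,…,L}: ‖J̃^(ℓ) − J^(ℓ)‖_F ≤ (B_P B_W C_σ)^{L−ℓ} L_loss E_H + U Σ_{i=0}^{L−ℓ−1} (B_P B_W C_σ)^i. -/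
/-!
With `e ℓ = ‖J̃^(ℓ) - J^(ℓ)‖`, subtracting the exact from the stale backward step splits the
error into the propagated error `(P_in + P_bd)ᵀ (M̃^(ℓ) - M^(ℓ)) Wᵀ`, the weight-staleness term
`P_bdᵀ M̃'^(ℓ) (W - W')ᵀ` and the feature-staleness term `P_bdᵀ (M̃^(ℓ) - M̃'^(ℓ)) Wᵀ`. Since
`|τ| ≤ C_σ` and `τ` is `L_σ`-Lipschitz, `‖M̃^(ℓ) - M^(ℓ)‖ ≤ B_J L_σ E_Z + C_σ e ℓ`, so
`e (ℓ - 1) ≤ B_P B_W C_σ e ℓ + U`; unrolling this recursion down from `ℓ = L` gives the bound.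
-/

open Matrix

attribute [local instance] Matrix.frobeniusNormedAddCommGroup

attribute [local instance] Matrix.frobeniusNormSMulClass

namespace Matrix

variable {m n : Type*} [Fintype m] [Fintype n]

theorem norm_entry_le_frobenius_norm {α : Type*} [NormedAddCommGroup α] (A : Matrix m n α)
    (i : m) (j : n) : ‖A i j‖ ≤ ‖A‖ :=
  calc ‖A i j‖ ≤ ‖WithLp.toLp 2 (A i)‖ := PiLp.norm_apply_le (WithLp.toLp 2 (A i)) j
    _ ≤ ‖A‖ := PiLp.norm_apply_le (WithLp.toLp 2 fun i => WithLp.toLp 2 (A i)) i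

theorem frobenius_norm_le_of_forall_norm_le {α β : Type*} [NormedAddCommGroup α]
    [NormedAddCommGroup β] {A : Matrix m n α} {B : Matrix m n β}
    (h : ∀ i j, ‖A i j‖ ≤ ‖B i j‖) : ‖A‖ ≤ ‖B‖ := by
  rw [frobenius_norm_def, frobenius_norm_def]
  gcongr with i _ j _
  exact h i j

theorem frobenius_norm_le_mul_of_forall_norm_le {α : Type*} [NormedAddCommGroup α]
    {A : Matrix m n α} {B : Matrix m n ℝ} {c : ℝ} (hc : 0 ≤ c)
    (h : ∀ i j, ‖A i j‖ ≤ c * ‖B i j‖) : ‖A‖ ≤ c * ‖B‖ := by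
  have hcB : ‖A‖ ≤ ‖c • B‖ := frobenius_norm_le_of_forall_norm_le fun i j => by
    simpa [norm_smul, Real.norm_of_nonneg hc] using h i j
  rwa [norm_smul, Real.norm_of_nonneg hc] at hcB

theorem frobenius_norm_hadamard_le_mul_of_abs_le {A B : Matrix m n ℝ} {c : ℝ} (hc : 0 ≤ c)
    (hA : ∀ i j, |A i j| ≤ c) : ‖A ⊙ B‖ ≤ c * ‖B‖ :=
  frobenius_norm_le_mul_of_forall_norm_le hc fun i j => by
    simp only [hadamard_apply, norm_mul, Real.norm_eq_abs]
    exact mul_le_mul_of_nonneg_right (hA i j) (abs_nonneg _)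

theorem frobenius_norm_hadamard_le (A B : Matrix m n ℝ) : ‖A ⊙ B‖ ≤ ‖A‖ * ‖B‖ :=
  frobenius_norm_hadamard_le_mul_of_abs_le (norm_nonneg A) fun i j =>
    norm_entry_le_frobenius_norm A i j

theorem frobenius_norm_map_sub_map_le {τ : ℝ → ℝ} {K : ℝ}
    (hτ : ∀ x y, |τ x - τ y| ≤ K * |x - y|) (A B : Matrix m n ℝ) :
    ‖A.map τ - B.map τ‖ ≤ K * ‖A - B‖ := by
  have hK : 0 ≤ K := by simpa using (abs_nonneg _).trans (hτ 0 1)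
  exact frobenius_norm_le_mul_of_forall_norm_le hK fun i j => hτ (A i j) (B i j)

theorem frobenius_norm_transpose_mul_mul_transpose_le {α : Type*} [RCLike α] {m' n' : Type*}
    [Fintype m'] [Fintype n'] (P : Matrix m m' α) (M : Matrix m n α) (W : Matrix n' n α) :
    ‖Pᵀ * M * Wᵀ‖ ≤ ‖P‖ * ‖M‖ * ‖W‖ := by
  calc ‖Pᵀ * M * Wᵀ‖ ≤ ‖Pᵀ‖ * ‖M‖ * ‖Wᵀ‖ :=
        (frobenius_norm_mul _ _).trans
          (mul_le_mul_of_nonneg_right (frobenius_norm_mul _ _) (norm_nonneg _))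
    _ = ‖P‖ * ‖M‖ * ‖W‖ := by rw [frobenius_norm_transpose, frobenius_norm_transpose]

end Matrix

theorem le_pow_mul_add_mul_geom_sum_of_le_mul_add {e : ℕ → ℝ} {q U : ℝ} {L : ℕ} (hq : 0 ≤ q)
    (he : ∀ ℓ, 2 ≤ ℓ → ℓ ≤ L → e (ℓ - 1) ≤ q * e ℓ + U) :
    ∀ ℓ, 1 ≤ ℓ → ℓ ≤ L →
      e ℓ ≤ q ^ (L - ℓ) * e L + U * ∑ i ∈ Finset.range (L - ℓ), q ^ i := by
  intro ℓ h1 hℓ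
  obtain ⟨k, rfl⟩ : ∃ k, ℓ = L - k := ⟨L - ℓ, by omega⟩
  have hk : k < L := by omega
  rw [show L - (L - k) = k by omega]
  clear h1 hℓ
  induction k with
  | zero => simp
  | succ k ih =>
    calc e (L - (k + 1)) ≤ q * e (L - k) + U := by
          simpa [show L - k - 1 = L - (k + 1) by omega] using he (L - k) (by omega) (by omega)
      _ ≤ q * (q ^ k * e L + U * ∑ i ∈ Finset.range k, q ^ i) + U := by
          gcongr; exact ih (by omega)
      _ = q ^ (k + 1) * e L + U * ∑ i ∈ Finset.range (k + 1), q ^ i := by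
          rw [geom_sum_succ]; ring

section StaleBackward

variable {m m' n n' : Type*} [Fintype m] [Fintype m'] [Fintype n] [Fintype n']

theorem norm_hadamard_map_sub_hadamard_map_le {τ : ℝ → ℝ} {C K : ℝ}
    (hτb : ∀ x, |τ x| ≤ C) (hτl : ∀ x y, |τ x - τ y| ≤ K * |x - y|)
    (A A' Z Z' : Matrix m n ℝ) :
    ‖A' ⊙ Z'.map τ - A ⊙ Z.map τ‖ ≤ ‖A'‖ * (K * ‖Z' - Z‖) + C * ‖A' - A‖ := by
  have hC : 0 ≤ C := (abs_nonneg _).trans (hτb 0)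
  have hsplit : A' ⊙ Z'.map τ - A ⊙ Z.map τ
      = A' ⊙ (Z'.map τ - Z.map τ) + Z.map τ ⊙ (A' - A) := by
    ext i j
    simp only [hadamard_apply, Matrix.sub_apply, Matrix.add_apply, map_apply]
    ring
  calc ‖A' ⊙ Z'.map τ - A ⊙ Z.map τ‖
      ≤ ‖A' ⊙ (Z'.map τ - Z.map τ)‖ + ‖Z.map τ ⊙ (A' - A)‖ := hsplit ▸ norm_add_le _ _
    _ ≤ ‖A'‖ * (K * ‖Z' - Z‖) + C * ‖A' - A‖ := by
      gcongr
      · exact (frobenius_norm_hadamard_le _ _).trans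
          (by gcongr; exact frobenius_norm_map_sub_map_le hτl Z' Z)
      · exact frobenius_norm_hadamard_le_mul_of_abs_le hC fun i j => hτb (Z i j)

theorem norm_stale_backward_sub_backward_le (Pin Pbd : Matrix m m' ℝ) (W W' : Matrix n' n ℝ)
    (M Mt Mt' : Matrix m n ℝ) :
    ‖Pinᵀ * Mt * Wᵀ + Pbdᵀ * Mt' * W'ᵀ - (Pin + Pbd)ᵀ * M * Wᵀ‖
      ≤ ‖Pin + Pbd‖ * ‖Mt - M‖ * ‖W‖ + ‖Pbd‖ * ‖Mt'‖ * ‖W - W'‖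
        + ‖Pbd‖ * ‖Mt - Mt'‖ * ‖W‖ := by
  have hsplit : Pinᵀ * Mt * Wᵀ + Pbdᵀ * Mt' * W'ᵀ - (Pin + Pbd)ᵀ * M * Wᵀ
      = (Pin + Pbd)ᵀ * (Mt - M) * Wᵀ - Pbdᵀ * Mt' * (W - W')ᵀ
        - Pbdᵀ * (Mt - Mt') * Wᵀ := by
    simp only [transpose_add, transpose_sub, Matrix.add_mul, Matrix.sub_mul, Matrix.mul_sub]
    abel
  rw [hsplit]
  refine (norm_sub_le _ _).trans (add_le_add ((norm_sub_le _ _).trans (add_le_add ?_ ?_)) ?_) <;>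
    exact frobenius_norm_transpose_mul_mul_transpose_le _ _ _

theorem norm_stale_backward_sub_backward_le_of_bounds {τ : ℝ → ℝ}
    {Cσ Lσ BP BW BΔW BJ BM BΔM EZ : ℝ}
    (hτb : ∀ x, |τ x| ≤ Cσ) (hτl : ∀ x y, |τ x - τ y| ≤ Lσ * |x - y|)
    {Pin Pbd : Matrix m m' ℝ} {W W' : Matrix n' n ℝ} {J Jt Z Zt Mt' : Matrix m n ℝ}
    (hP : ‖Pin‖ + ‖Pbd‖ ≤ BP) (hW : ‖W‖ ≤ BW) (hΔW : ‖W - W'‖ ≤ BΔW)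
    (hEZ : ‖Zt - Z‖ ≤ EZ) (hJbd : ‖Jt‖ ≤ BJ) (hMbd : ‖Mt'‖ ≤ BM)
    (hΔM : ‖Jt ⊙ Zt.map τ - Mt'‖ ≤ BΔM) :
    ‖Pinᵀ * (Jt ⊙ Zt.map τ) * Wᵀ + Pbdᵀ * Mt' * W'ᵀ - (Pin + Pbd)ᵀ * (J ⊙ Z.map τ) * Wᵀ‖
      ≤ BP * BW * Cσ * ‖Jt - J‖ + BP * (BW * BJ * EZ * Lσ + BΔW * BM + BW * BΔM) := by
  have hLσ : 0 ≤ Lσ := by simpa using (abs_nonneg _).trans (hτl 0 1)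
  have hPin : ‖Pin + Pbd‖ ≤ BP := (norm_add_le _ _).trans hP
  have hPbd : ‖Pbd‖ ≤ BP := (le_add_of_nonneg_left (norm_nonneg _)).trans hP
  have hBP : 0 ≤ BP := (norm_nonneg _).trans hPbd
  have hBJ : 0 ≤ BJ := (norm_nonneg _).trans hJbd
  have hBM : 0 ≤ BM := (norm_nonneg _).trans hMbd
  have hBΔM : 0 ≤ BΔM := (norm_nonneg _).trans hΔM
  have hEZ0 : 0 ≤ EZ := (norm_nonneg _).trans hEZ
  have hCσ : 0 ≤ Cσ := (abs_nonneg _).trans (hτb 0)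
  calc _ ≤ ‖Pin + Pbd‖ * ‖Jt ⊙ Zt.map τ - J ⊙ Z.map τ‖ * ‖W‖ + ‖Pbd‖ * ‖Mt'‖ * ‖W - W'‖
        + ‖Pbd‖ * ‖Jt ⊙ Zt.map τ - Mt'‖ * ‖W‖ := norm_stale_backward_sub_backward_le _ _ _ _ _ _ _
    _ ≤ BP * (BJ * (Lσ * EZ) + Cσ * ‖Jt - J‖) * BW + BP * BM * BΔW + BP * BΔM * BW := by
      have hM := (norm_hadamard_map_sub_hadamard_map_le hτb hτl J Jt Z Zt).trans
        (show _ ≤ BJ * (Lσ * EZ) + Cσ * ‖Jt - J‖ by gcongr)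
      gcongr
    _ = _ := by ring

end StaleBackward

theorem stmt_12_general (L n : ℕ) (d : ℕ → ℕ)
    (τ : ℝ → ℝ) (Cσ Lσ : ℝ)
    (hτb : ∀ x : ℝ, |τ x| ≤ Cσ)
    (hτl : ∀ x y : ℝ, |τ x - τ y| ≤ Lσ * |x - y|)
    (BP BW BΔW BJ BM BΔM EZ EH Lloss : ℝ)
    (Pin Pbd : Matrix (Fin n) (Fin n) ℝ) (hP : ‖Pin‖ + ‖Pbd‖ ≤ BP)
    (W W' : (ℓ : ℕ) → Matrix (Fin (d (ℓ - 1))) (Fin (d ℓ)) ℝ)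
    (hW : ∀ ℓ, 1 ≤ ℓ → ℓ ≤ L → ‖W ℓ‖ ≤ BW)
    (hΔW : ∀ ℓ, 1 ≤ ℓ → ℓ ≤ L → ‖W ℓ - W' ℓ‖ ≤ BΔW)
    (Z J Zt Jt Mt' : (ℓ : ℕ) → Matrix (Fin n) (Fin (d ℓ)) ℝ)
    (hJ : ∀ ℓ, 2 ≤ ℓ → ℓ ≤ L →
      J (ℓ - 1) = (Pin + Pbd)ᵀ * (J ℓ ⊙ (Z ℓ).map τ) * (W ℓ)ᵀ)
    (hJt : ∀ ℓ, 2 ≤ ℓ → ℓ ≤ L →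
      Jt (ℓ - 1) = Pinᵀ * (Jt ℓ ⊙ (Zt ℓ).map τ) * (W ℓ)ᵀ + Pbdᵀ * Mt' ℓ * (W' ℓ)ᵀ)
    (hJL : ‖Jt L - J L‖ ≤ Lloss * EH)
    (hEZ : ∀ ℓ, 1 ≤ ℓ → ℓ ≤ L → ‖Zt ℓ - Z ℓ‖ ≤ EZ)
    (hJbd : ∀ ℓ, 1 ≤ ℓ → ℓ ≤ L → ‖Jt ℓ‖ ≤ BJ)
    (hMbd : ∀ ℓ, 1 ≤ ℓ → ℓ ≤ L → ‖Mt' ℓ‖ ≤ BM)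
    (hΔM : ∀ ℓ, 1 ≤ ℓ → ℓ ≤ L → ‖Jt ℓ ⊙ (Zt ℓ).map τ - Mt' ℓ‖ ≤ BΔM) :
    ∀ ℓ, 1 ≤ ℓ → ℓ ≤ L →
      ‖Jt ℓ - J ℓ‖ ≤ (BP * BW * Cσ) ^ (L - ℓ) * Lloss * EH
        + BP * (BW * BJ * EZ * Lσ + BΔW * BM + BW * BΔM) *
            ∑ i ∈ Finset.range (L - ℓ), (BP * BW * Cσ) ^ i := by
  intro ℓ h1 hℓ
  have hq : 0 ≤ BP * BW * Cσ := by
    have hBP : 0 ≤ BP := (add_nonneg (norm_nonneg _) (norm_nonneg _)).trans hP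
    have hBW : 0 ≤ BW := (norm_nonneg _).trans (hW ℓ h1 hℓ)
    have hCσ : 0 ≤ Cσ := (abs_nonneg _).trans (hτb 0)
    positivity
  have hstep : ∀ k, 2 ≤ k → k ≤ L → ‖Jt (k - 1) - J (k - 1)‖
      ≤ BP * BW * Cσ * ‖Jt k - J k‖ + BP * (BW * BJ * EZ * Lσ + BΔW * BM + BW * BΔM) :=
    fun k h2 hk => by
      have hk1 : 1 ≤ k := by omega
      rw [hJt k h2 hk, hJ k h2 hk]
      exact norm_stale_backward_sub_backward_le_of_bounds hτb hτl hP (hW k hk1 hk)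
        (hΔW k hk1 hk) (hEZ k hk1 hk) (hJbd k hk1 hk) (hMbd k hk1 hk) (hΔM k hk1 hk)
  calc ‖Jt ℓ - J ℓ‖
      ≤ (BP * BW * Cσ) ^ (L - ℓ) * ‖Jt L - J L‖ + BP * (BW * BJ * EZ * Lσ + BΔW * BM + BW * BΔM)
          * ∑ i ∈ Finset.range (L - ℓ), (BP * BW * Cσ) ^ i :=
        le_pow_mul_add_mul_geom_sum_of_le_mul_add (e := fun k => ‖Jt k - J k‖) hq hstep ℓ h1 hℓ
    _ ≤ _ := by rw [mul_assoc _ Lloss]; gcongr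

/-- Bounded error between PipeGCN's stale backward pass and the exact backward pass
computed with the current weights, in Frobenius norm; `τ` plays the role of the
activation derivative `σ'` and `⊙` is the Hadamard product. -/
theorem stmt_12 (L n : ℕ) (hL : 2 ≤ L) (d : ℕ → ℕ)
    (τ : ℝ → ℝ) (Cσ Lσ : ℝ)
    (hτb : ∀ x : ℝ, |τ x| ≤ Cσ)
    (hτl : ∀ x y : ℝ, |τ x - τ y| ≤ Lσ * |x - y|)
    (BP BW BΔW BJ BM BΔM EZ EH Lloss : ℝ)
    (Pin Pbd : Matrix (Fin n) (Fin n) ℝ) (hP : ‖Pin‖ + ‖Pbd‖ ≤ BP)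
    (W W' : (ℓ : ℕ) → Matrix (Fin (d (ℓ - 1))) (Fin (d ℓ)) ℝ)
    (hW : ∀ ℓ, 1 ≤ ℓ → ℓ ≤ L → ‖W ℓ‖ ≤ BW)
    (hW' : ∀ ℓ, 1 ≤ ℓ → ℓ ≤ L → ‖W' ℓ‖ ≤ BW)
    (hΔW : ∀ ℓ, 1 ≤ ℓ → ℓ ≤ L → ‖W ℓ - W' ℓ‖ ≤ BΔW)
    (Z J Zt Jt Mt' : (ℓ : ℕ) → Matrix (Fin n) (Fin (d ℓ)) ℝ)
    (hJ : ∀ ℓ, 2 ≤ ℓ → ℓ ≤ L →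
      J (ℓ - 1) = (Pin + Pbd)ᵀ * (J ℓ ⊙ (Z ℓ).map τ) * (W ℓ)ᵀ)
    (hJt : ∀ ℓ, 2 ≤ ℓ → ℓ ≤ L →
      Jt (ℓ - 1) = Pinᵀ * (Jt ℓ ⊙ (Zt ℓ).map τ) * (W ℓ)ᵀ + Pbdᵀ * Mt' ℓ * (W' ℓ)ᵀ)
    (hJL : ‖Jt L - J L‖ ≤ Lloss * EH)
    (hEZ : ∀ ℓ, 1 ≤ ℓ → ℓ ≤ L → ‖Zt ℓ - Z ℓ‖ ≤ EZ)
    (hJbd : ∀ ℓ, 1 ≤ ℓ → ℓ ≤ L → ‖Jt ℓ‖ ≤ BJ)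
    (hMbd : ∀ ℓ, 1 ≤ ℓ → ℓ ≤ L → ‖Mt' ℓ‖ ≤ BM)
    (hΔM : ∀ ℓ, 1 ≤ ℓ → ℓ ≤ L → ‖Jt ℓ ⊙ (Zt ℓ).map τ - Mt' ℓ‖ ≤ BΔM) :
    ∀ ℓ, 1 ≤ ℓ → ℓ ≤ L →
      ‖Jt ℓ - J ℓ‖ ≤ (BP * BW * Cσ) ^ (L - ℓ) * Lloss * EH
        + BP * (BW * BJ * EZ * Lσ + BΔW * BM + BW * BΔM) *
            ∑ i ∈ Finset.range (L - ℓ), (BP * BW * Cσ) ^ i :=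
  stmt_12_general L n d τ Cσ Lσ hτb hτl BP BW BΔW BJ BM BΔM EZ EH Lloss Pin Pbd hP W W' hW hΔW Z J
    Zt Jt Mt' hJ hJt hJL hEZ hJbd hMbd hΔM
end

section
/- Let P_in, P_bd ∈ ℝ^{n×n} with ‖P_in‖_F + ‖P_bd‖_F ≤ B_P and set P = P_in + P_bd. Let H, H̃, H̃' ∈ ℝ^{n×d} and M, M̃ ∈ ℝ^{n×d'} satisfy ‖H‖_F ≤ B_H, ‖M̃‖_F ≤ B_M, ‖H̃ − H‖_F ≤ E_H, ‖H̃' − H̃‖_F ≤ B_{ΔH}, and ‖M̃ − M‖_F ≤ E_M. Then ‖(P_in H̃ + P_bd H̃')ᵀ M̃ − (P H)ᵀ M‖_F ≤ B_M B_P (E_H + B_{ΔH}) + B_P B_H E_M. -/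
open Matrix

attribute [local instance] Matrix.frobeniusNormedAddCommGroup

/-- Per-layer weight-gradient error bound of PipeGCN: the exact weight gradient is
`(P H)ᵀ M` with `P = Pin + Pbd`, and PipeGCN's weight gradient is
`(Pin Ht + Pbd Ht')ᵀ Mt`; all norms are Frobenius norms. -/
theorem stmt_14 (n dd dd' : ℕ) (BP BH BM EH BΔH EM : ℝ)
    (Pin Pbd : Matrix (Fin n) (Fin n) ℝ) (hP : ‖Pin‖ + ‖Pbd‖ ≤ BP)
    (H Ht Ht' : Matrix (Fin n) (Fin dd) ℝ)
    (M Mt : Matrix (Fin n) (Fin dd') ℝ)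
    (hH : ‖H‖ ≤ BH) (hMt : ‖Mt‖ ≤ BM)
    (hEH : ‖Ht - H‖ ≤ EH) (hΔH : ‖Ht' - Ht‖ ≤ BΔH) (hEM : ‖Mt - M‖ ≤ EM) :
    ‖(Pin * Ht + Pbd * Ht')ᵀ * Mt - ((Pin + Pbd) * H)ᵀ * M‖ ≤
      BM * BP * (EH + BΔH) + BP * BH * EM := by
  have hEH0 : (0:ℝ) ≤ EH := le_trans (norm_nonneg _) hEH
  have hΔH0 : (0:ℝ) ≤ BΔH := le_trans (norm_nonneg _) hΔH
  have hBP0 : (0:ℝ) ≤ BP := le_trans (by positivity) hP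
  have hBH0 : (0:ℝ) ≤ BH := le_trans (norm_nonneg _) hH
  have hBM0 : (0:ℝ) ≤ BM := le_trans (norm_nonneg _) hMt
  set X : Matrix (Fin n) (Fin dd) ℝ := (Pin + Pbd) * H
  set Xt : Matrix (Fin n) (Fin dd) ℝ := Pin * Ht + Pbd * Ht'
  have hdecomp : Xtᵀ * Mt - Xᵀ * M = (Xt - X)ᵀ * Mt + Xᵀ * (Mt - M) := by
    simp only [Matrix.transpose_sub, Matrix.sub_mul, Matrix.mul_sub]
    abel
  have hXdiff : ‖Xt - X‖ ≤ BP * (EH + BΔH) := by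
    have hrw : Xt - X = Pin * (Ht - H) + Pbd * (Ht' - H) := by
      simp [Xt, X, Matrix.mul_sub, Matrix.add_mul]
      abel
    have h1 : ‖Pin * (Ht - H)‖ ≤ ‖Pin‖ * (EH + BΔH) :=
      le_trans (Matrix.frobenius_norm_mul _ _)
        (mul_le_mul_of_nonneg_left (by linarith) (norm_nonneg _))
    have h2 : ‖Pbd * (Ht' - H)‖ ≤ ‖Pbd‖ * (EH + BΔH) := by
      refine le_trans (Matrix.frobenius_norm_mul _ _)
        (mul_le_mul_of_nonneg_left ?_ (norm_nonneg _))
      calc ‖Ht' - H‖ = ‖(Ht' - Ht) + (Ht - H)‖ := by abel_nf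
        _ ≤ ‖Ht' - Ht‖ + ‖Ht - H‖ := norm_add_le _ _
        _ ≤ EH + BΔH := by linarith
    calc ‖Xt - X‖ ≤ ‖Pin * (Ht - H)‖ + ‖Pbd * (Ht' - H)‖ := by
          rw [hrw]; exact norm_add_le _ _
      _ ≤ (‖Pin‖ + ‖Pbd‖) * (EH + BΔH) := by linarith
      _ ≤ BP * (EH + BΔH) := by nlinarith
  have hX : ‖X‖ ≤ BP * BH := by
    refine le_trans (Matrix.frobenius_norm_mul _ _) ?_
    have : ‖Pin + Pbd‖ ≤ BP := le_trans (norm_add_le _ _) hP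
    exact mul_le_mul this hH (norm_nonneg _) hBP0
  calc ‖Xtᵀ * Mt - Xᵀ * M‖ ≤ ‖(Xt - X)ᵀ * Mt‖ + ‖Xᵀ * (Mt - M)‖ := by
        rw [hdecomp]; exact norm_add_le _ _
    _ ≤ ‖Xt - X‖ * ‖Mt‖ + ‖X‖ * ‖Mt - M‖ := by
        have a := Matrix.frobenius_norm_mul (Xt - X)ᵀ Mt
        have b := Matrix.frobenius_norm_mul Xᵀ (Mt - M)
        rw [Matrix.frobenius_norm_transpose] at a b
        linarith
    _ ≤ BP * (EH + BΔH) * BM + BP * BH * EM := by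
        have t1 : ‖Xt - X‖ * ‖Mt‖ ≤ BP * (EH + BΔH) * BM :=
          mul_le_mul hXdiff hMt (norm_nonneg _) (by positivity)
        have t2 : ‖X‖ * ‖Mt - M‖ ≤ BP * BH * EM :=
          mul_le_mul hX hEM (norm_nonneg _) (by positivity)
        linarith
    _ = BM * BP * (EH + BΔH) + BP * BH * EM := by ring
end
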